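/- Let η be an integer with 1 ≤ η < 2 (i.e. η = 1), let λ > 0, T > 0, C > 0, and let ψ be a uniformly compactly supported classical solution of (NLS) on ℝ × [0,T]. Define P(t) := ∫_{ℝ} |x ψ(x,t) + 2it ∂ψ/∂x(x,t)|² dx + (4t²λ/(η+1)) ∫_{ℝ} |ψ(x,t)|^{2η+2} dx, and suppose that P is differentiable with P′(t) ≤ C for all t ∈ (0,T]. Then the time-decay estimate holds: for every t ∈ (0,T], ( ∫_{ℝ} |ψ(x,t)|^{2η+2} dx )^{1/(2η+2)} ≤ ( (η+1) C / (4λ(2−η)) )^{1/(2η+2)} · t^{−1/(2η+2)}; in particular ‖ψ(·,t)‖_{L^{2η+2}(ℝ)} ≲ t^{−1/(2η+2)}. -/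

import Mathlib

open MeasureTheory

/-- The pseudo-conformal quantity in one space dimension:
`P(t) = ∫ |xψ + 2it ψₓ|² dx + (4t²λ/(η+1)) ∫ |ψ|^{2η+2} dx`. -/
noncomputable def pseudoConformalQuantity1D (η : ℕ) (lam : ℝ) (ψ : ℝ → ℝ → ℂ) (t : ℝ) : ℝ :=
  (∫ x : ℝ, ‖(x : ℂ) * ψ x t
      + 2 * Complex.I * (t : ℂ) * deriv (fun y => ψ y t) x‖ ^ 2)
    + (4 * t ^ 2 * lam / (η + 1)) * ∫ x : ℝ, ‖ψ x t‖ ^ (2 * η + 2)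


open MeasureTheory Complex Set

namespace NLSAux
noncomputable section







variable {E : Type*} [NormedAddCommGroup E] [NormedSpace ℝ E]

lemma hasDerivAt_slice_fst {G : ℝ × ℝ → E} {x t : ℝ} (hG : DifferentiableAt ℝ G (x, t)) :
    HasDerivAt (fun y => G (y, t)) (fderiv ℝ G (x, t) (1, 0)) x := by
  have h1 : HasDerivAt (fun y : ℝ => (y, t)) ((1 : ℝ), (0 : ℝ)) x :=
    (hasDerivAt_id x).prodMk (hasDerivAt_const x t)
  exact hG.hasFDerivAt.comp_hasDerivAt x h1

lemma hasDerivAt_slice_snd {G : ℝ × ℝ → E} {x t : ℝ} (hG : DifferentiableAt ℝ G (x, t)) :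
    HasDerivAt (fun s => G (x, s)) (fderiv ℝ G (x, t) (0, 1)) t := by
  have h1 : HasDerivAt (fun s : ℝ => (x, s)) ((0 : ℝ), (1 : ℝ)) t :=
    (hasDerivAt_const t x).prodMk (hasDerivAt_id t)
  exact hG.hasFDerivAt.comp_hasDerivAt t h1

lemma contDiff_pderiv_fst {f : ℝ → ℝ → E} (hf : ContDiff ℝ (⊤ : ℕ∞) (fun p : ℝ × ℝ => f p.1 p.2)) :
    ContDiff ℝ (⊤ : ℕ∞) (fun p : ℝ × ℝ => deriv (fun y => f y p.2) p.1) := by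
  have h1 : (fun p : ℝ × ℝ => deriv (fun y => f y p.2) p.1)
      = fun p => fderiv ℝ (fun q : ℝ × ℝ => f q.1 q.2) p (1, 0) := by
    funext p
    exact (hasDerivAt_slice_fst ((hf.differentiable (by simp)) p)).deriv
  rw [h1]
  exact ContDiff.fderiv_apply (f := fun _ q : ℝ × ℝ => f q.1 q.2)
    (hf.comp contDiff_snd) contDiff_id contDiff_const (by simp)

lemma contDiff_pderiv_snd {f : ℝ → ℝ → E} (hf : ContDiff ℝ (⊤ : ℕ∞) (fun p : ℝ × ℝ => f p.1 p.2)) :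
    ContDiff ℝ (⊤ : ℕ∞) (fun p : ℝ × ℝ => deriv (fun s => f p.1 s) p.2) := by
  have h1 : (fun p : ℝ × ℝ => deriv (fun s => f p.1 s) p.2)
      = fun p => fderiv ℝ (fun q : ℝ × ℝ => f q.1 q.2) p (0, 1) := by
    funext p
    exact (hasDerivAt_slice_snd ((hf.differentiable (by simp)) p)).deriv
  rw [h1]
  exact ContDiff.fderiv_apply (f := fun _ q : ℝ × ℝ => f q.1 q.2)
    (hf.comp contDiff_snd) contDiff_id contDiff_const (by simp)

/-- Clairaut / symmetry of second derivatives for a jointly smooth function. -/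
lemma deriv_comm {f : ℝ → ℝ → E} (hf : ContDiff ℝ (⊤ : ℕ∞) (fun p : ℝ × ℝ => f p.1 p.2)) (x t : ℝ) :
    deriv (fun s => deriv (fun y => f y s) x) t = deriv (fun y => deriv (fun s => f y s) t) x := by
  set F : ℝ × ℝ → E := fun p => f p.1 p.2 with hF
  have hdF : Differentiable ℝ F := hf.differentiable (by simp)
  have hdF' : Differentiable ℝ (fderiv ℝ F) :=
    (hf.fderiv_right (m := (⊤ : ℕ∞)) (by simp)).differentiable (by simp)
  have hsymm : IsSymmSndFDerivAt ℝ F (x, t) :=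
    hf.contDiffAt.isSymmSndFDerivAt (by rw [minSmoothness_of_isRCLikeNormedField]; exact WithTop.coe_le_coe.2 le_top)
  -- left side
  have h1 : ∀ v : ℝ × ℝ, deriv (fun s => fderiv ℝ F (x, s) v) t
      = fderiv ℝ (fderiv ℝ F) (x, t) (0, 1) v := by
    intro v
    have hc : HasDerivAt (fun s => fderiv ℝ F (x, s)) (fderiv ℝ (fderiv ℝ F) (x, t) (0, 1)) t :=
      hasDerivAt_slice_snd (hdF' (x, t))
    have := ((ContinuousLinearMap.apply ℝ E v).hasFDerivAt.comp_hasDerivAt t hc)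
    simpa [Function.comp_def] using this.deriv
  have h2 : ∀ v : ℝ × ℝ, deriv (fun y => fderiv ℝ F (y, t) v) x
      = fderiv ℝ (fderiv ℝ F) (x, t) (1, 0) v := by
    intro v
    have hc : HasDerivAt (fun y => fderiv ℝ F (y, t)) (fderiv ℝ (fderiv ℝ F) (x, t) (1, 0)) x :=
      hasDerivAt_slice_fst (hdF' (x, t))
    have := ((ContinuousLinearMap.apply ℝ E v).hasFDerivAt.comp_hasDerivAt x hc)
    simpa [Function.comp_def] using this.deriv
  have e1 : (fun s => deriv (fun y => f y s) x) = fun s => fderiv ℝ F (x, s) (1, 0) := by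
    funext s
    exact (hasDerivAt_slice_fst (hdF (x, s))).deriv
  have e2 : (fun y => deriv (fun s => f y s) t) = fun y => fderiv ℝ F (y, t) (0, 1) := by
    funext y
    exact (hasDerivAt_slice_snd (hdF (y, t))).deriv
  rw [e1, e2, h1 ((1 : ℝ), (0 : ℝ)), h2 ((0 : ℝ), (1 : ℝ))]
  exact hsymm (0, 1) (1, 0)








variable {E : Type*} [NormedAddCommGroup E] [NormedSpace ℝ E]

lemma deriv_eq_zero_on_open {g : ℝ → E} {U : Set ℝ} (hU : IsOpen U)
    (h : ∀ x ∈ U, g x = 0) {x : ℝ} (hx : x ∈ U) : deriv g x = 0 := by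
  have hev : g =ᶠ[nhds x] fun _ => (0 : E) :=
    Filter.eventually_of_mem (hU.mem_nhds hx) h
  rw [hev.deriv_eq, deriv_const]

/-- differentiation under the integral over a compact set. -/
lemma hasDerivAt_setIntegral_param {B : Set ℝ} (hB : IsCompact B) (hBm : MeasurableSet B)
    {H H' : ℝ → ℝ → ℝ} (hH : Continuous fun p : ℝ × ℝ => H p.1 p.2)
    (hH' : Continuous fun p : ℝ × ℝ => H' p.1 p.2)
    (hd : ∀ x s, HasDerivAt (fun r => H x r) (H' x s) s) (t₀ : ℝ) :
    HasDerivAt (fun s => ∫ x in B, H x s) (∫ x in B, H' x t₀) t₀ := by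
  have hcs : IsCompact (B ×ˢ Icc (t₀ - 1) (t₀ + 1)) := hB.prod isCompact_Icc
  obtain ⟨M, hM⟩ : ∃ M, ∀ p ∈ B ×ˢ Icc (t₀ - 1) (t₀ + 1), ‖(fun p : ℝ × ℝ => H' p.1 p.2) p‖ ≤ M :=
    hcs.exists_bound_of_continuousOn hH'.continuousOn
  have key := hasDerivAt_integral_of_dominated_loc_of_deriv_le
    (μ := volume.restrict B) (F := fun s x => H x s) (F' := fun s x => H' x s)
    (bound := fun _ => M) (x₀ := t₀) (s := Metric.ball t₀ 1) (Metric.ball_mem_nhds t₀ one_pos)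
    (Filter.Eventually.of_forall fun s =>
      (hH.comp (continuous_id.prodMk continuous_const)).aestronglyMeasurable)
    ((hH.comp (continuous_id.prodMk continuous_const)).continuousOn.integrableOn_compact hB)
    (hH'.comp (continuous_id.prodMk continuous_const)).aestronglyMeasurable
    ?_ (integrableOn_const hB.measure_lt_top.ne) ?_
  · exact key.2
  · refine (ae_restrict_iff' hBm).2 (Filter.Eventually.of_forall fun x hx s hs => ?_)
    exact hM (x, s) ⟨hx, by
      rw [Metric.mem_ball, Real.dist_eq] at hs
      constructor <;> [linarith [abs_le.1 hs.le]; linarith [(abs_le.1 hs.le).2]]⟩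
  · exact Filter.Eventually.of_forall fun x s _ => hd x s

/-- integral of the derivative of a compactly supported C¹ function vanishes. -/
lemma integral_deriv_eq_zero_of_support {S : ℝ → ℝ} {K : Set ℝ} (hK : IsCompact K)
    (hS : Differentiable ℝ S) (hS' : Continuous (deriv S)) (h0 : ∀ x ∉ K, S x = 0) :
    ∫ x : ℝ, deriv S x = 0 := by
  obtain ⟨R, hR⟩ : ∃ R : ℝ, K ⊆ Metric.closedBall 0 R := hK.isBounded.subset_closedBall 0
  set R' := max R 0 + 1 with hR'
  have hRR' : Metric.closedBall (0 : ℝ) R ⊆ Metric.ball 0 R' :=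
    Metric.closedBall_subset_ball (by simp [hR']; linarith [le_max_left R 0])
  have hzero : ∀ x ∉ Metric.ball (0 : ℝ) R', deriv S x = 0 := by
    intro x hx
    refine deriv_eq_zero_on_open (Metric.isClosed_closedBall (x := (0:ℝ)) (ε := R)).isOpen_compl
      (fun y hy => h0 y fun hyK => hy (hR hyK)) ?_
    exact fun hxc => hx (hRR' hxc)
  have hIcc : ∀ x ∉ Icc (-R') R', deriv S x = 0 := by
    intro x hx
    refine hzero x fun hxb => hx ?_
    rw [Metric.mem_ball, Real.dist_eq, sub_zero] at hxb
    exact ⟨by linarith [(abs_lt.1 hxb).1], by linarith [(abs_lt.1 hxb).2]⟩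
  have hind : (fun x => deriv S x) = (Icc (-R') R').indicator (fun x => deriv S x) := by
    funext x
    by_cases hx : x ∈ Icc (-R') R'
    · rw [indicator_of_mem hx]
    · rw [indicator_of_notMem hx, hIcc x hx]
  have hle : -R' ≤ R' := by
    have : (0:ℝ) ≤ R' := by positivity
    linarith
  rw [hind, integral_indicator measurableSet_Icc, integral_Icc_eq_integral_Ioc,
    ← intervalIntegral.integral_of_le hle,
    intervalIntegral.integral_deriv_eq_sub (fun x _ => hS x)
      (hS'.intervalIntegrable _ _)]
  have h1 : S R' = 0 := h0 _ fun hmem => by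
    have := hR hmem
    rw [Metric.mem_closedBall, Real.dist_eq, sub_zero] at this
    have h2 := (abs_le.1 this).2
    simp only [hR'] at *
    linarith [le_max_left R 0]
  have h2 : S (-R') = 0 := h0 _ fun hmem => by
    have := hR hmem
    rw [Metric.mem_closedBall, Real.dist_eq, sub_zero] at this
    have h2 := (abs_le.1 this).1
    simp only [hR'] at *
    linarith [le_max_left R 0]
  rw [h1, h2, sub_zero]

/-- derivative of `normSq ∘ g`. -/
lemma hasDerivAt_normSq {g : ℝ → ℂ} {g' : ℂ} {t : ℝ} (hg : HasDerivAt g g' t) :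
    HasDerivAt (fun s => Complex.normSq (g s)) (2 * ((starRingEnd ℂ) (g t) * g').re) t := by
  have hre : HasDerivAt (fun s => (g s).re) g'.re t := by
    simpa [Function.comp_def] using (Complex.reCLM.hasFDerivAt.comp_hasDerivAt t hg)
  have him : HasDerivAt (fun s => (g s).im) g'.im t := by
    simpa [Function.comp_def] using (Complex.imCLM.hasFDerivAt.comp_hasDerivAt t hg)
  have h := (hre.mul hre).add (him.mul him)
  have heq : (fun s => Complex.normSq (g s)) = fun s => (g s).re * (g s).re + (g s).im * (g s).im := by
    funext s; rw [Complex.normSq_apply]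
  rw [heq]
  refine h.congr_deriv ?_
  simp [Complex.mul_re]
  ring

lemma hasDerivAt_conj {g : ℝ → ℂ} {g' : ℂ} {t : ℝ} (hg : HasDerivAt g g' t) :
    HasDerivAt (fun s => (starRingEnd ℂ) (g s)) ((starRingEnd ℂ) g') t := by
  simpa [Function.comp_def] using ((Complex.conjCLE : ℂ ≃L[ℝ] ℂ).toContinuousLinearMap.hasFDerivAt.comp_hasDerivAt t hg)

lemma hasDerivAt_re {g : ℝ → ℂ} {g' : ℂ} {t : ℝ} (hg : HasDerivAt g g' t) :
    HasDerivAt (fun s => (g s).re) g'.re t := by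
  simpa [Function.comp_def] using (Complex.reCLM.hasFDerivAt.comp_hasDerivAt t hg)

lemma hasDerivAt_im {g : ℝ → ℂ} {g' : ℂ} {t : ℝ} (hg : HasDerivAt g g' t) :
    HasDerivAt (fun s => (g s).im) g'.im t := by
  simpa [Function.comp_def] using (Complex.imCLM.hasFDerivAt.comp_hasDerivAt t hg)

lemma hasDerivAt_ofReal (t : ℝ) : HasDerivAt (fun s : ℝ => (s : ℂ)) 1 t := by
  simpa using (hasDerivAt_id t).ofReal_comp








/-- The divergence-form pointwise identity behind the pseudo-conformal derivative. -/
lemma main_pointwise {u u1 u2 u3 : ℝ → ℂ} (x t lam : ℝ)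
    (hu : ∀ y, HasDerivAt u (u1 y) y) (hu1 : ∀ y, HasDerivAt u1 (u2 y) y)
    (hu2 : ∀ y, HasDerivAt u2 (u3 y) y) :
    2 * ((starRingEnd ℂ) ((x : ℂ) * u x + 2 * Complex.I * (t : ℂ) * u1 x) *
          ((x : ℂ) * (-Complex.I * ((lam : ℂ) * ((Complex.normSq (u x) : ℝ) : ℂ) * u x - u2 x))
            + 2 * Complex.I * u1 x
            + 2 * Complex.I * (t : ℂ) *
              (-Complex.I * ((lam : ℂ) * (((2 : ℝ) * ((starRingEnd ℂ) (u x) * u1 x).re : ℝ) : ℂ)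
                  * u x
                + (lam : ℂ) * ((Complex.normSq (u x) : ℝ) : ℂ) * u1 x - u3 x)))).re
      + 2 * lam * t * Complex.normSq (u x) ^ 2
      + 2 * lam * t ^ 2 * (2 * Complex.normSq (u x) *
          (2 * ((starRingEnd ℂ) (u x) *
            (-Complex.I * ((lam : ℂ) * ((Complex.normSq (u x) : ℝ) : ℂ) * u x - u2 x))).re))
    = deriv (fun y =>
        (-2) * (y ^ 2 * ((starRingEnd ℂ) (u y) * u1 y).im)
        + 4 * t * ((y * Complex.normSq (u1 y) - y * ((starRingEnd ℂ) (u y) * u2 y).re)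
            + (lam / 2 * (y * Complex.normSq (u y) ^ 2) + ((starRingEnd ℂ) (u y) * u1 y).re))
        - 8 * t ^ 2 * (((starRingEnd ℂ) (u1 y) * u2 y).im
            + lam * (Complex.normSq (u y) * ((starRingEnd ℂ) (u y) * u1 y).im))) x := by
  have hA : HasDerivAt (fun y : ℝ => (-2 : ℝ) * (y ^ 2 * ((starRingEnd ℂ) (u y) * u1 y).im))
      ((-2 : ℝ) * ((2 : ℕ) * x ^ (2 - 1) * ((starRingEnd ℂ) (u x) * u1 x).im
        + x ^ 2 * ((starRingEnd ℂ) (u1 x) * u1 x + (starRingEnd ℂ) (u x) * u2 x).im)) x :=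
    ((hasDerivAt_pow 2 x).mul (hasDerivAt_im ((hasDerivAt_conj (hu x)).mul (hu1 x)))).const_mul
      (-2 : ℝ)
  have hB : HasDerivAt (fun y : ℝ =>
      4 * t * ((y * Complex.normSq (u1 y) - y * ((starRingEnd ℂ) (u y) * u2 y).re)
        + (lam / 2 * (y * Complex.normSq (u y) ^ 2) + ((starRingEnd ℂ) (u y) * u1 y).re)))
      (4 * t * (((1 * Complex.normSq (u1 x) + x * (2 * ((starRingEnd ℂ) (u1 x) * u2 x).re))
          - (1 * ((starRingEnd ℂ) (u x) * u2 x).re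
            + x * ((starRingEnd ℂ) (u1 x) * u2 x + (starRingEnd ℂ) (u x) * u3 x).re))
        + (lam / 2 * (1 * Complex.normSq (u x) ^ 2
            + x * ((2 : ℕ) * Complex.normSq (u x) ^ (2 - 1)
              * (2 * ((starRingEnd ℂ) (u x) * u1 x).re)))
          + ((starRingEnd ℂ) (u1 x) * u1 x + (starRingEnd ℂ) (u x) * u2 x).re))) x := by
    refine HasDerivAt.const_mul _ (HasDerivAt.add (HasDerivAt.sub ?_ ?_) (HasDerivAt.add ?_ ?_))
    · exact (hasDerivAt_id x).mul (hasDerivAt_normSq (hu1 x))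
    · exact (hasDerivAt_id x).mul (hasDerivAt_re ((hasDerivAt_conj (hu x)).mul (hu2 x)))
    · exact ((hasDerivAt_id x).mul ((hasDerivAt_normSq (hu x)).pow 2)).const_mul (lam / 2)
    · exact hasDerivAt_re ((hasDerivAt_conj (hu x)).mul (hu1 x))
  have hC : HasDerivAt (fun y : ℝ => 8 * t ^ 2 * (((starRingEnd ℂ) (u1 y) * u2 y).im
      + lam * (Complex.normSq (u y) * ((starRingEnd ℂ) (u y) * u1 y).im)))
      (8 * t ^ 2 * (((starRingEnd ℂ) (u2 x) * u2 x + (starRingEnd ℂ) (u1 x) * u3 x).im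
        + lam * ((2 * ((starRingEnd ℂ) (u x) * u1 x).re)
              * ((starRingEnd ℂ) (u x) * u1 x).im
            + Complex.normSq (u x)
              * ((starRingEnd ℂ) (u1 x) * u1 x + (starRingEnd ℂ) (u x) * u2 x).im))) x := by
    refine HasDerivAt.const_mul _ (HasDerivAt.add ?_ (HasDerivAt.const_mul _ ?_))
    · exact hasDerivAt_im ((hasDerivAt_conj (hu1 x)).mul (hu2 x))
    · exact (hasDerivAt_normSq (hu x)).mul (hasDerivAt_im ((hasDerivAt_conj (hu x)).mul (hu1 x)))
  have HS := (hA.add hB).sub hC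
  erw [HS.deriv]
  simp only [Complex.mul_re, Complex.mul_im, Complex.add_re, Complex.add_im, Complex.sub_re,
    Complex.sub_im, Complex.neg_re, Complex.neg_im, Complex.I_re, Complex.I_im,
    Complex.conj_re, Complex.conj_im, Complex.ofReal_re, Complex.ofReal_im,
    Complex.normSq_apply, Complex.re_ofNat, Complex.im_ofNat]
  push_cast
  ring









/-- partial derivative in the first (space) variable -/
def px (f : ℝ → ℝ → ℂ) : ℝ → ℝ → ℂ := fun x t => deriv (fun y => f y t) x

/-- partial derivative in the second (time) variable -/
def pt (f : ℝ → ℝ → ℂ) : ℝ → ℝ → ℂ := fun x t => deriv (fun s => f x s) t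

def Jf (ψ : ℝ → ℝ → ℂ) (x s : ℝ) : ℂ :=
  (x : ℂ) * ψ x s + 2 * Complex.I * (s : ℂ) * px ψ x s

def gI (ψ : ℝ → ℝ → ℂ) (x s : ℝ) : ℝ := Complex.normSq (Jf ψ x s)

def hI (ψ : ℝ → ℝ → ℂ) (x s : ℝ) : ℝ := Complex.normSq (ψ x s) ^ 2

def GtI (ψ : ℝ → ℝ → ℂ) (x s : ℝ) : ℝ :=
  2 * ((starRingEnd ℂ) (Jf ψ x s) * ((x : ℂ) * pt ψ x s
    + (2 * Complex.I * 1 * px ψ x s + 2 * Complex.I * (s : ℂ) * pt (px ψ) x s))).re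

def HtI (ψ : ℝ → ℝ → ℂ) (x s : ℝ) : ℝ :=
  ((2 : ℕ) : ℝ) * Complex.normSq (ψ x s) ^ (2 - 1)
    * (2 * ((starRingEnd ℂ) (ψ x s) * pt ψ x s).re)

section smooth

variable {ψ : ℝ → ℝ → ℂ} (hsmooth : ContDiff ℝ (⊤ : ℕ∞) (fun p : ℝ × ℝ => ψ p.1 p.2))

-- slice smoothness
lemma contDiff_slice_x {E : Type*} [NormedAddCommGroup E] [NormedSpace ℝ E]
    {f : ℝ → ℝ → E} (hf : ContDiff ℝ (⊤ : ℕ∞) (fun p : ℝ × ℝ => f p.1 p.2)) (t : ℝ) :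
    ContDiff ℝ (⊤ : ℕ∞) (fun y => f y t) := hf.comp (contDiff_id.prodMk contDiff_const)

lemma contDiff_slice_t {E : Type*} [NormedAddCommGroup E] [NormedSpace ℝ E]
    {f : ℝ → ℝ → E} (hf : ContDiff ℝ (⊤ : ℕ∞) (fun p : ℝ × ℝ => f p.1 p.2)) (x : ℝ) :
    ContDiff ℝ (⊤ : ℕ∞) (fun s => f x s) := hf.comp (contDiff_const.prodMk contDiff_id)

end smooth

-- ContDiff helpers on ℂ-valued functions of a real variable
lemma contDiff_re_comp {f : ℝ → ℂ} (hf : ContDiff ℝ (⊤ : ℕ∞) f) :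
    ContDiff ℝ (⊤ : ℕ∞) (fun y => (f y).re) := Complex.reCLM.contDiff.comp hf

lemma contDiff_im_comp {f : ℝ → ℂ} (hf : ContDiff ℝ (⊤ : ℕ∞) f) :
    ContDiff ℝ (⊤ : ℕ∞) (fun y => (f y).im) := Complex.imCLM.contDiff.comp hf

lemma contDiff_conj_comp {f : ℝ → ℂ} (hf : ContDiff ℝ (⊤ : ℕ∞) f) :
    ContDiff ℝ (⊤ : ℕ∞) (fun y => (starRingEnd ℂ) (f y)) :=
  ((Complex.conjCLE : ℂ ≃L[ℝ] ℂ).toContinuousLinearMap.contDiff).comp hf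

lemma contDiff_normSq_comp {f : ℝ → ℂ} (hf : ContDiff ℝ (⊤ : ℕ∞) f) :
    ContDiff ℝ (⊤ : ℕ∞) (fun y => Complex.normSq (f y)) := by
  have : (fun y => Complex.normSq (f y))
      = fun y => (f y).re * (f y).re + (f y).im * (f y).im := by
    funext y; rw [Complex.normSq_apply]
  rw [this]
  exact ((contDiff_re_comp hf).mul (contDiff_re_comp hf)).add
    ((contDiff_im_comp hf).mul (contDiff_im_comp hf))



lemma hasDerivAt_ofReal_comp {f : ℝ → ℝ} {f' t : ℝ} (hf : HasDerivAt f f' t) :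
    HasDerivAt (fun s => ((f s : ℝ) : ℂ)) (f' : ℂ) t := by
  simpa [Function.comp_def] using (Complex.ofRealCLM.hasFDerivAt.comp_hasDerivAt t hf)

variable {ψ : ℝ → ℝ → ℂ}

lemma hasDerivAt_time_gI (hsmooth : ContDiff ℝ (⊤ : ℕ∞) (fun p : ℝ × ℝ => ψ p.1 p.2)) (x s : ℝ) :
    HasDerivAt (fun r => gI ψ x r) (GtI ψ x s) s := by
  have hψs : HasDerivAt (fun r => ψ x r) (pt ψ x s) s :=
    ((contDiff_slice_t hsmooth x).differentiable (by simp) s).hasDerivAt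
  have hψ1s : HasDerivAt (fun r => px ψ x r) (pt (px ψ) x s) s :=
    ((contDiff_slice_t (f := px ψ) (contDiff_pderiv_fst hsmooth) x).differentiable
      (by simp) s).hasDerivAt
  have hJ : HasDerivAt (fun r => (x : ℂ) * ψ x r + 2 * Complex.I * (r : ℂ) * px ψ x r)
      ((x : ℂ) * pt ψ x s + (2 * Complex.I * 1 * px ψ x s
        + 2 * Complex.I * (s : ℂ) * pt (px ψ) x s)) s :=
    (hψs.const_mul (x : ℂ)).add
      ((HasDerivAt.const_mul (2 * Complex.I) (hasDerivAt_ofReal s)).mul hψ1s)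
  exact hasDerivAt_normSq hJ

lemma hasDerivAt_time_hI (hsmooth : ContDiff ℝ (⊤ : ℕ∞) (fun p : ℝ × ℝ => ψ p.1 p.2)) (x s : ℝ) :
    HasDerivAt (fun r => hI ψ x r) (HtI ψ x s) s := by
  have hψs : HasDerivAt (fun r => ψ x r) (pt ψ x s) s :=
    ((contDiff_slice_t hsmooth x).differentiable (by simp) s).hasDerivAt
  exact (hasDerivAt_normSq hψs).pow 2

lemma continuous_gI (hsmooth : ContDiff ℝ (⊤ : ℕ∞) (fun p : ℝ × ℝ => ψ p.1 p.2)) :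
    Continuous fun p : ℝ × ℝ => gI ψ p.1 p.2 := by
  have c1 : Continuous fun p : ℝ × ℝ => px ψ p.1 p.2 := (contDiff_pderiv_fst hsmooth).continuous
  exact Complex.continuous_normSq.comp
    ((((Complex.continuous_ofReal.comp continuous_fst).mul hsmooth.continuous)).add
      ((continuous_const.mul (Complex.continuous_ofReal.comp continuous_snd)).mul c1))

lemma continuous_hI (hsmooth : ContDiff ℝ (⊤ : ℕ∞) (fun p : ℝ × ℝ => ψ p.1 p.2)) :
    Continuous fun p : ℝ × ℝ => hI ψ p.1 p.2 :=
  (Complex.continuous_normSq.comp hsmooth.continuous).pow 2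

lemma continuous_GtI (hsmooth : ContDiff ℝ (⊤ : ℕ∞) (fun p : ℝ × ℝ => ψ p.1 p.2)) :
    Continuous fun p : ℝ × ℝ => GtI ψ p.1 p.2 := by
  have c1 : Continuous fun p : ℝ × ℝ => px ψ p.1 p.2 := (contDiff_pderiv_fst hsmooth).continuous
  have ct : Continuous fun p : ℝ × ℝ => pt ψ p.1 p.2 := (contDiff_pderiv_snd hsmooth).continuous
  have c1t : Continuous fun p : ℝ × ℝ => pt (px ψ) p.1 p.2 :=
    (contDiff_pderiv_snd (f := px ψ) (contDiff_pderiv_fst hsmooth)).continuous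
  have hJc : Continuous fun p : ℝ × ℝ => Jf ψ p.1 p.2 :=
    (((Complex.continuous_ofReal.comp continuous_fst).mul hsmooth.continuous)).add
      ((continuous_const.mul (Complex.continuous_ofReal.comp continuous_snd)).mul c1)
  refine continuous_const.mul (Complex.continuous_re.comp ?_)
  refine (Complex.continuous_conj.comp hJc).mul ?_
  exact (((Complex.continuous_ofReal.comp continuous_fst).mul ct)).add
    (((continuous_const.mul c1)).add
      ((continuous_const.mul (Complex.continuous_ofReal.comp continuous_snd)).mul c1t))

lemma continuous_HtI (hsmooth : ContDiff ℝ (⊤ : ℕ∞) (fun p : ℝ × ℝ => ψ p.1 p.2)) :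
    Continuous fun p : ℝ × ℝ => HtI ψ p.1 p.2 := by
  have ct : Continuous fun p : ℝ × ℝ => pt ψ p.1 p.2 := (contDiff_pderiv_snd hsmooth).continuous
  refine (continuous_const.mul ((Complex.continuous_normSq.comp hsmooth.continuous).pow _)).mul
    (continuous_const.mul (Complex.continuous_re.comp ?_))
  exact (Complex.continuous_conj.comp hsmooth.continuous).mul ct

end
end NLSAux
namespace NLSAux
noncomputable section

lemma key {ψ : ℝ → ℝ → ℂ} (hsmooth : ContDiff ℝ (⊤ : ℕ∞) (fun p : ℝ × ℝ => ψ p.1 p.2))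
    {lam T : ℝ} {K : Set ℝ} (hK : IsCompact K)
    (hsupp : ∀ x ∉ K, ∀ t ∈ Set.Icc (0 : ℝ) T, ψ x t = 0)
    (heq' : ∀ (x : ℝ), ∀ t ∈ Set.Icc (0 : ℝ) T,
      deriv (ψ x) t = -Complex.I * ((lam : ℂ) * ((Complex.normSq (ψ x t) : ℝ) : ℂ) * ψ x t
        - deriv (fun y => deriv (fun z => ψ z t) y) x))
    {t₀ : ℝ} (ht₀ : t₀ ∈ Set.Icc (0 : ℝ) T) :
    HasDerivWithinAt (pseudoConformalQuantity1D 1 lam ψ)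
      (2 * lam * t₀ * ∫ x : ℝ, Complex.normSq (ψ x t₀) ^ 2) (Set.Icc 0 T) t₀ := by
  classical
  obtain ⟨R, hR⟩ := hK.isBounded.subset_closedBall 0
  set B : Set ℝ := Metric.closedBall 0 R with hBdef
  have hBc : IsCompact B := isCompact_closedBall 0 R
  have hBm : MeasurableSet B := measurableSet_closedBall
  have hKc : IsOpen Kᶜ := hK.isClosed.isOpen_compl
  have hvan : ∀ s ∈ Set.Icc (0:ℝ) T, ∀ x ∉ K, ψ x s = 0 := fun s hs x hx => hsupp x hx s hs
  have hvan1 : ∀ s ∈ Set.Icc (0:ℝ) T, ∀ x ∉ K, px ψ x s = 0 := fun s hs x hx =>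
    deriv_eq_zero_on_open hKc (fun y hy => hsupp y hy s hs) hx
  have hs1 := contDiff_pderiv_fst hsmooth
  have hs2 := contDiff_pderiv_fst (f := px ψ) hs1
  have hs3 := contDiff_pderiv_fst (f := px (px ψ)) hs2
  -- integrals over ℝ equal integrals over B for K-supported integrands
  have hIndic : ∀ F : ℝ → ℝ, (∀ x ∉ K, F x = 0) → ∫ x : ℝ, F x = ∫ x in B, F x := by
    intro F hF
    have hFi : F = B.indicator F := by
      funext x
      by_cases hx : x ∈ B
      · rw [Set.indicator_of_mem hx]
      · rw [Set.indicator_of_notMem hx, hF x fun hxK => hx (hR hxK)]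
    conv_lhs => rw [hFi]
    exact integral_indicator hBm
  -- derivative of the auxiliary function Q
  have hA : HasDerivAt (fun s => ∫ x in B, gI ψ x s) (∫ x in B, GtI ψ x t₀) t₀ :=
    hasDerivAt_setIntegral_param hBc hBm (continuous_gI hsmooth) (continuous_GtI hsmooth)
      (fun x s => hasDerivAt_time_gI hsmooth x s) t₀
  have hHd : HasDerivAt (fun s => ∫ x in B, hI ψ x s) (∫ x in B, HtI ψ x t₀) t₀ :=
    hasDerivAt_setIntegral_param hBc hBm (continuous_hI hsmooth) (continuous_HtI hsmooth)
      (fun x s => hasDerivAt_time_hI hsmooth x s) t₀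
  have hcoef : HasDerivAt (fun s : ℝ => 4 * s ^ 2 * lam / (((1:ℕ):ℝ) + 1))
      (4 * (((2:ℕ):ℝ) * t₀ ^ (2-1)) * lam / (((1:ℕ):ℝ) + 1)) t₀ :=
    (((hasDerivAt_pow 2 t₀).const_mul 4).mul_const lam).div_const _
  have hQ := hA.add (hcoef.mul hHd)
  -- P agrees with Q on [0,T]
  have hEq : ∀ s ∈ Set.Icc (0:ℝ) T, pseudoConformalQuantity1D 1 lam ψ s
      = (∫ x in B, gI ψ x s) + (4 * s ^ 2 * lam / (((1:ℕ):ℝ) + 1)) * ∫ x in B, hI ψ x s := by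
    intro s hs
    unfold pseudoConformalQuantity1D
    have e1 : ∀ x : ℝ, ‖(x:ℂ) * ψ x s
        + 2 * Complex.I * (s:ℂ) * deriv (fun y => ψ y s) x‖ ^ 2 = gI ψ x s := fun x =>
      Complex.sq_norm _
    have e2 : ∀ x : ℝ, ‖ψ x s‖ ^ (2*1+2) = hI ψ x s := by
      intro x
      show _ = Complex.normSq (ψ x s) ^ 2
      rw [← Complex.sq_norm]
      ring
    rw [show (∫ x : ℝ, ‖(x:ℂ) * ψ x s
        + 2 * Complex.I * (s:ℂ) * deriv (fun y => ψ y s) x‖ ^ 2) = ∫ x : ℝ, gI ψ x s from by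
        simp only [e1],
      show (∫ x : ℝ, ‖ψ x s‖ ^ (2*1+2)) = ∫ x : ℝ, hI ψ x s from by simp only [e2],
      hIndic _ fun x hx => by simp [gI, Jf, hvan s hs x hx, hvan1 s hs x hx],
      hIndic _ fun x hx => by simp [hI, hvan s hs x hx]]
  have hPd := hQ.hasDerivWithinAt.congr hEq (hEq t₀ ht₀)
  -- pointwise divergence identity
  have hu : ∀ y, HasDerivAt (fun y' => ψ y' t₀) (px ψ y t₀) y := fun y =>
    ((contDiff_slice_x hsmooth t₀).differentiable (by simp) y).hasDerivAt
  have hu1 : ∀ y, HasDerivAt (fun y' => px ψ y' t₀) (px (px ψ) y t₀) y := fun y =>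
    ((contDiff_slice_x (f := px ψ) hs1 t₀).differentiable (by simp) y).hasDerivAt
  have hu2 : ∀ y, HasDerivAt (fun y' => px (px ψ) y' t₀) (px (px (px ψ)) y t₀) y := fun y =>
    ((contDiff_slice_x (f := px (px ψ)) hs2 t₀).differentiable (by simp) y).hasDerivAt
  have hpde : ∀ y, pt ψ y t₀ = -Complex.I * ((lam:ℂ) * ((Complex.normSq (ψ y t₀) : ℝ):ℂ) * ψ y t₀
      - px (px ψ) y t₀) := fun y => heq' y t₀ ht₀
  have hpde1 : ∀ x, pt (px ψ) x t₀
      = -Complex.I * ((lam:ℂ) * (((2:ℝ) * ((starRingEnd ℂ) (ψ x t₀) * px ψ x t₀).re : ℝ) : ℂ)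
            * ψ x t₀
          + (lam:ℂ) * ((Complex.normSq (ψ x t₀) : ℝ):ℂ) * px ψ x t₀
          - px (px (px ψ)) x t₀) := by
    intro x
    have hcomm := deriv_comm (f := ψ) hsmooth x t₀
    have hfn : (fun y => deriv (fun s => ψ y s) t₀)
        = fun y => -Complex.I * ((lam:ℂ) * ((Complex.normSq (ψ y t₀) : ℝ):ℂ) * ψ y t₀
            - px (px ψ) y t₀) := funext fun y => heq' y t₀ ht₀
    have hder : HasDerivAt (fun y => -Complex.I * ((lam:ℂ)
          * ((Complex.normSq (ψ y t₀) : ℝ):ℂ) * ψ y t₀ - px (px ψ) y t₀))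
        (-Complex.I * (((lam:ℂ) * (((2:ℝ) * ((starRingEnd ℂ) (ψ x t₀) * px ψ x t₀).re : ℝ) : ℂ)
            * ψ x t₀
          + (lam:ℂ) * ((Complex.normSq (ψ x t₀) : ℝ):ℂ) * px ψ x t₀)
          - px (px (px ψ)) x t₀)) x :=
      (((HasDerivAt.const_mul (lam:ℂ) (hasDerivAt_ofReal_comp
          (hasDerivAt_normSq (hu x)))).mul (hu x)).sub (hu2 x)).const_mul (-Complex.I)
    calc pt (px ψ) x t₀ = deriv (fun y => deriv (fun s => ψ y s) t₀) x := hcomm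
      _ = _ := by
        rw [hfn, hder.deriv]
  have hpoint : ∀ x : ℝ, GtI ψ x t₀ + 2 * lam * t₀ * hI ψ x t₀ + 2 * lam * t₀ ^ 2 * HtI ψ x t₀
      = deriv (fun y =>
        (-2) * (y ^ 2 * ((starRingEnd ℂ) (ψ y t₀) * px ψ y t₀).im)
        + 4 * t₀ * ((y * Complex.normSq (px ψ y t₀)
            - y * ((starRingEnd ℂ) (ψ y t₀) * px (px ψ) y t₀).re)
          + (lam / 2 * (y * Complex.normSq (ψ y t₀) ^ 2)
            + ((starRingEnd ℂ) (ψ y t₀) * px ψ y t₀).re))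
        - 8 * t₀ ^ 2 * (((starRingEnd ℂ) (px ψ y t₀) * px (px ψ) y t₀).im
            + lam * (Complex.normSq (ψ y t₀)
              * ((starRingEnd ℂ) (ψ y t₀) * px ψ y t₀).im))) x := by
    intro x
    have hmp := main_pointwise (u := fun y => ψ y t₀) (u1 := fun y => px ψ y t₀)
      (u2 := fun y => px (px ψ) y t₀) (u3 := fun y => px (px (px ψ)) y t₀) x t₀ lam hu hu1 hu2
    simp only [GtI, hI, HtI, Jf, gI]
    rw [hpde x, hpde1 x]
    rw [← hmp]
    have harg : ((x:ℂ) * (-Complex.I * ((lam:ℂ) * ((Complex.normSq (ψ x t₀) : ℝ):ℂ) * ψ x t₀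
          - px (px ψ) x t₀))
        + (2 * Complex.I * 1 * px ψ x t₀
          + 2 * Complex.I * (t₀:ℂ) * (-Complex.I * ((lam:ℂ)
              * (((2:ℝ) * ((starRingEnd ℂ) (ψ x t₀) * px ψ x t₀).re : ℝ) : ℂ) * ψ x t₀
            + (lam:ℂ) * ((Complex.normSq (ψ x t₀) : ℝ):ℂ) * px ψ x t₀
            - px (px (px ψ)) x t₀))))
        = ((x:ℂ) * (-Complex.I * ((lam:ℂ) * ((Complex.normSq (ψ x t₀) : ℝ):ℂ) * ψ x t₀
          - px (px ψ) x t₀))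
        + 2 * Complex.I * px ψ x t₀
        + 2 * Complex.I * (t₀:ℂ) * (-Complex.I * ((lam:ℂ)
              * (((2:ℝ) * ((starRingEnd ℂ) (ψ x t₀) * px ψ x t₀).re : ℝ) : ℂ) * ψ x t₀
            + (lam:ℂ) * ((Complex.normSq (ψ x t₀) : ℝ):ℂ) * px ψ x t₀
            - px (px (px ψ)) x t₀))) := by ring
    rw [harg]
    push_cast
    ring

  set S : ℝ → ℝ := fun y =>
    (-2) * (y ^ 2 * ((starRingEnd ℂ) (ψ y t₀) * px ψ y t₀).im)
    + 4 * t₀ * ((y * Complex.normSq (px ψ y t₀)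
        - y * ((starRingEnd ℂ) (ψ y t₀) * px (px ψ) y t₀).re)
      + (lam / 2 * (y * Complex.normSq (ψ y t₀) ^ 2)
        + ((starRingEnd ℂ) (ψ y t₀) * px ψ y t₀).re))
    - 8 * t₀ ^ 2 * (((starRingEnd ℂ) (px ψ y t₀) * px (px ψ) y t₀).im
        + lam * (Complex.normSq (ψ y t₀)
          * ((starRingEnd ℂ) (ψ y t₀) * px ψ y t₀).im)) with hSdef
  have hcu : ContDiff ℝ (⊤ : ℕ∞) (fun y => ψ y t₀) := contDiff_slice_x hsmooth t₀
  have hcu1 : ContDiff ℝ (⊤ : ℕ∞) (fun y => px ψ y t₀) := contDiff_slice_x (f := px ψ) hs1 t₀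
  have hcu2 : ContDiff ℝ (⊤ : ℕ∞) (fun y => px (px ψ) y t₀) :=
    contDiff_slice_x (f := px (px ψ)) hs2 t₀
  have hScd : ContDiff ℝ (⊤ : ℕ∞) S := by
    rw [hSdef]
    refine ContDiff.sub (ContDiff.add ?_ ?_) ?_
    · exact contDiff_const.mul ((contDiff_id.pow 2).mul
        (contDiff_im_comp ((contDiff_conj_comp hcu).mul hcu1)))
    · exact contDiff_const.mul (((contDiff_id.mul (contDiff_normSq_comp hcu1)).sub
        (contDiff_id.mul (contDiff_re_comp ((contDiff_conj_comp hcu).mul hcu2)))).add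
        ((contDiff_const.mul (contDiff_id.mul ((contDiff_normSq_comp hcu).pow 2))).add
          (contDiff_re_comp ((contDiff_conj_comp hcu).mul hcu1))))
    · exact contDiff_const.mul ((contDiff_im_comp ((contDiff_conj_comp hcu1).mul hcu2)).add
        (contDiff_const.mul ((contDiff_normSq_comp hcu).mul
          (contDiff_im_comp ((contDiff_conj_comp hcu).mul hcu1)))))
  have hSvan : ∀ x ∉ K, S x = 0 := by
    intro x hx
    have h0 := hvan t₀ ht₀ x hx
    have h1 := hvan1 t₀ ht₀ x hx
    simp only [hSdef]
    simp [h0, h1]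
  have hSint : ∫ x in B, deriv S x = 0 := by
    have h1 : ∫ x : ℝ, deriv S x = ∫ x in B, deriv S x :=
      hIndic _ fun x hx => deriv_eq_zero_on_open hKc (fun y hy => hSvan y hy) hx
    rw [← h1]
    exact integral_deriv_eq_zero_of_support hK (hScd.differentiable (by simp))
      (hScd.continuous_deriv (by simp)) hSvan
  have hGti : IntegrableOn (fun x => GtI ψ x t₀) B :=
    (((continuous_GtI hsmooth).comp
      (continuous_id.prodMk continuous_const)).continuousOn).integrableOn_compact hBc
  have hhIi : IntegrableOn (fun x => hI ψ x t₀) B :=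
    (((continuous_hI hsmooth).comp
      (continuous_id.prodMk continuous_const)).continuousOn).integrableOn_compact hBc
  have hHti : IntegrableOn (fun x => HtI ψ x t₀) B :=
    (((continuous_HtI hsmooth).comp
      (continuous_id.prodMk continuous_const)).continuousOn).integrableOn_compact hBc
  have hsum : ∫ x in B, (GtI ψ x t₀ + (2 * lam * t₀ * hI ψ x t₀
        + 2 * lam * t₀ ^ 2 * HtI ψ x t₀))
      = (∫ x in B, GtI ψ x t₀) + (2 * lam * t₀ * (∫ x in B, hI ψ x t₀)
        + 2 * lam * t₀ ^ 2 * (∫ x in B, HtI ψ x t₀)) := by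
    have e1 := integral_add (μ := volume.restrict B) hGti
      ((hhIi.const_mul (2 * lam * t₀)).add (hHti.const_mul (2 * lam * t₀ ^ 2)))
    have e2 := integral_add (μ := volume.restrict B)
      (hhIi.const_mul (2 * lam * t₀)) (hHti.const_mul (2 * lam * t₀ ^ 2))
    have e3 := integral_const_mul (μ := volume.restrict B) (2 * lam * t₀) (fun x => hI ψ x t₀)
    have e4 := integral_const_mul (μ := volume.restrict B) (2 * lam * t₀ ^ 2)
      (fun x => HtI ψ x t₀)
    simp only [Pi.add_apply] at e1 e2
    linarith [e1, e2, e3, e4]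
  have hptw : ∫ x in B, (GtI ψ x t₀ + (2 * lam * t₀ * hI ψ x t₀
        + 2 * lam * t₀ ^ 2 * HtI ψ x t₀)) = ∫ x in B, deriv S x := by
    refine setIntegral_congr_fun hBm fun x _ => ?_
    rw [← hpoint x]
    ring
  have hzero : (∫ x in B, GtI ψ x t₀) + (2 * lam * t₀ * (∫ x in B, hI ψ x t₀)
      + 2 * lam * t₀ ^ 2 * (∫ x in B, HtI ψ x t₀)) = 0 := by
    rw [← hsum, hptw, hSint]
  refine hPd.congr_deriv ?_
  have hFeq : ∫ x : ℝ, Complex.normSq (ψ x t₀) ^ 2 = ∫ x in B, hI ψ x t₀ := by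
    have h := hIndic (fun x => Complex.normSq (ψ x t₀) ^ 2)
      (fun x hx => by simp [hvan t₀ ht₀ x hx])
    rw [h]
    rfl
  rw [hFeq]
  have hcast2 : ((2:ℕ):ℝ) = 2 := by norm_num
  have hcast1 : ((1:ℕ):ℝ) = 1 := by norm_num
  rw [hcast2, hcast1, pow_one]
  set G := ∫ x in B, GtI ψ x t₀
  set H := ∫ x in B, hI ψ x t₀
  set Ht' := ∫ x in B, HtI ψ x t₀
  have h4 : 4 * (2 * t₀) * lam / (1 + 1) * H = 4 * lam * t₀ * H := by ring
  have h5 : 4 * t₀ ^ 2 * lam / (1 + 1) * Ht' = 2 * lam * t₀ ^ 2 * Ht' := by ring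
  rw [h4, h5]
  linarith [hzero]

end
end NLSAux

/-- Time-decay estimate in one dimension: for `1 ≤ η < 2`, `λ > 0`, a
uniformly compactly supported classical solution of `i ∂ₜψ + ψₓₓ = λ |ψ|^{2η} ψ` on
`ℝ × [0,T]`, if the pseudo-conformal quantity `P` is differentiable with `P′(t) ≤ C` on
`(0,T]`, then `‖ψ(·,t)‖_{L^{2η+2}} ≤ ((η+1)C/(4λ(2−η)))^{1/(2η+2)} t^{−1/(2η+2)}`. -/
theorem nls_time_decay_1d (η : ℕ) (hη₁ : 1 ≤ η) (hη₂ : η < 2) (lam T C : ℝ)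
    (hlam : 0 < lam) (hT : 0 < T) (hC : 0 < C) (ψ : ℝ → ℝ → ℂ)
    (hsmooth : ContDiff ℝ (⊤ : ℕ∞) (fun p : ℝ × ℝ => ψ p.1 p.2))
    (K : Set ℝ) (hK : IsCompact K)
    (hsupp : ∀ x ∉ K, ∀ t ∈ Set.Icc (0 : ℝ) T, ψ x t = 0)
    (heq : ∀ (x : ℝ), ∀ t ∈ Set.Icc (0 : ℝ) T,
      Complex.I * deriv (ψ x) t + deriv (fun y => deriv (fun z => ψ z t) y) x
        = (lam : ℂ) * ((‖ψ x t‖ ^ (2 * η) : ℝ) : ℂ) * ψ x t)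
    (hdiff : ∀ t ∈ Set.Icc (0 : ℝ) T,
      DifferentiableAt ℝ (pseudoConformalQuantity1D η lam ψ) t)
    (hbound : ∀ t ∈ Set.Ioc (0 : ℝ) T,
      deriv (pseudoConformalQuantity1D η lam ψ) t ≤ C) :
    ∀ t ∈ Set.Ioc (0 : ℝ) T,
      (∫ x : ℝ, ‖ψ x t‖ ^ (2 * η + 2)) ^ ((1 : ℝ) / (2 * η + 2))
        ≤ (((η : ℝ) + 1) * C / (4 * lam * (2 - (η : ℝ)))) ^ ((1 : ℝ) / (2 * η + 2))
            * t ^ (-(1 : ℝ) / (2 * η + 2)) := by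
  have hη : η = 1 := by omega
  subst hη
  intro t ht
  have htIcc : t ∈ Set.Icc (0 : ℝ) T := ⟨le_of_lt ht.1, ht.2⟩
  have heq' : ∀ (x : ℝ), ∀ s ∈ Set.Icc (0 : ℝ) T,
      deriv (ψ x) s = -Complex.I * ((lam : ℂ) * ((Complex.normSq (ψ x s) : ℝ) : ℂ) * ψ x s
        - deriv (fun y => deriv (fun z => ψ z s) y) x) := by
    intro x s hs
    have h := heq x s hs
    have habs : (‖ψ x s‖ ^ (2 * 1) : ℝ) = Complex.normSq (ψ x s) := by
      norm_num [Complex.sq_norm]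
    rw [habs] at h
    linear_combination (-Complex.I) * h + deriv (ψ x) s * Complex.I_sq
  have hkey := NLSAux.key hsmooth hK hsupp heq' htIcc
  have hd := (hdiff t htIcc).hasDerivAt.hasDerivWithinAt (s := Set.Icc (0 : ℝ) T)
  have hud : UniqueDiffWithinAt ℝ (Set.Icc (0 : ℝ) T) t := (uniqueDiffOn_Icc hT) t htIcc
  have hderiv_eq : deriv (pseudoConformalQuantity1D 1 lam ψ) t
      = 2 * lam * t * ∫ x : ℝ, Complex.normSq (ψ x t) ^ 2 := by
    rw [← hd.derivWithin hud, hkey.derivWithin hud]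
  have hb := hbound t ht
  rw [hderiv_eq] at hb
  have hFnn : 0 ≤ ∫ x : ℝ, Complex.normSq (ψ x t) ^ 2 :=
    integral_nonneg fun x => by positivity
  have hgoalint : (∫ x : ℝ, ‖ψ x t‖ ^ (2 * 1 + 2))
      = ∫ x : ℝ, Complex.normSq (ψ x t) ^ 2 := by
    congr 1
    funext x
    rw [show (2 * 1 + 2) = 4 from rfl, ← Complex.sq_norm]
    ring
  rw [hgoalint]
  have hFle : (∫ x : ℝ, Complex.normSq (ψ x t) ^ 2) ≤ C / (2 * lam) / t := by
    rw [div_div, le_div_iff₀ (mul_pos (by positivity : (0:ℝ) < 2 * lam) ht.1)]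
    nlinarith [hb]
  have he : (0 : ℝ) ≤ (1 : ℝ) / (2 * ((1 : ℕ) : ℝ) + 2) := by positivity
  calc (∫ x : ℝ, Complex.normSq (ψ x t) ^ 2) ^ ((1 : ℝ) / (2 * ((1 : ℕ) : ℝ) + 2))
      ≤ (C / (2 * lam) / t) ^ ((1 : ℝ) / (2 * ((1 : ℕ) : ℝ) + 2)) :=
        Real.rpow_le_rpow hFnn hFle he
    _ = ((((1 : ℕ) : ℝ) + 1) * C / (4 * lam * (2 - ((1 : ℕ) : ℝ))))
          ^ ((1 : ℝ) / (2 * ((1 : ℕ) : ℝ) + 2))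
        * t ^ (-(1 : ℝ) / (2 * ((1 : ℕ) : ℝ) + 2)) := by
      rw [show ((((1 : ℕ) : ℝ) + 1) * C / (4 * lam * (2 - ((1 : ℕ) : ℝ)))) = C / (2 * lam) from by
          push_cast
          rw [div_eq_div_iff (by positivity) (by positivity)]
          ring,
        div_eq_mul_inv (C / (2 * lam)) t,
        Real.mul_rpow (by positivity) (inv_nonneg.2 (le_of_lt ht.1)),
        Real.inv_rpow (le_of_lt ht.1), ← Real.rpow_neg (le_of_lt ht.1), neg_div]
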